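/- The polynomial 27y₃² - y₂³ is invariant under the vector field v: v(27y₃² - y₂³) is a polynomial multiple of 27y₃² - y₂³. -/

import Mathlib

/-!
On the variables `y₂, y₃` the field `v` is `s • E + N`, where `s = -(1 + (y₂ - x₂)/12)`,
`E = 2y₂ ∂_{y₂} + 3y₃ ∂_{y₃}` is the weighted Euler field and `N = 6y₃ ∂_{y₂} + (1/3)y₂² ∂_{y₃}`.
Since `27y₃² - y₂³` is weighted homogeneous of degree 6 and is annihilated by `N`, `v` multiplies
it by `6s`.
-/

open MvPolynomial

/-- The derivation `v` of ℚ[x₂,x₃,y₂,y₃] (variables `X 0 = x₂`, `X 1 = x₃`,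
`X 2 = y₂`, `X 3 = y₃`) with
`v(x₂) = 2x₂ - 6x₃ + (1/6)(x₂-y₂)x₂`,
`v(x₃) = 3x₃ - (1/3)x₂² + (1/4)(x₂-y₂)x₃`,
`v(y₂) = -(2y₂ - 6y₃ + (1/6)(y₂-x₂)y₂)`,
`v(y₃) = -(3y₃ - (1/3)y₂² + (1/4)(y₂-x₂)y₃)`. -/
noncomputable def vD : Derivation ℚ (MvPolynomial (Fin 4) ℚ) (MvPolynomial (Fin 4) ℚ) :=
  mkDerivation ℚ
    ![2 * X 0 - 6 * X 1 + C (1/6 : ℚ) * (X 0 - X 2) * X 0,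
      3 * X 1 - C (1/3 : ℚ) * X 0 ^ 2 + C (1/4 : ℚ) * (X 0 - X 2) * X 1,
      -(2 * X 2 - 6 * X 3 + C (1/6 : ℚ) * (X 2 - X 0) * X 2),
      -(3 * X 3 - C (1/3 : ℚ) * X 2 ^ 2 + C (1/4 : ℚ) * (X 2 - X 0) * X 3)]

namespace Derivation

variable {A : Type*} [CommRing A]

theorem map_twentySeven_sq_sub_cube {R : Type*} [CommSemiring R] [Algebra R A]
    (D : Derivation R A A) (a b : A) :
    D (27 * a ^ 2 - b ^ 3) = 54 * a * D a - 3 * b ^ 2 * D b := by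
  have h27 : D 27 = 0 := D.map_natCast 27
  simp only [map_sub, leibniz, leibniz_pow, h27, smul_eq_mul, nsmul_eq_mul]
  push_cast
  ring

theorem map_twentySeven_sq_sub_cube_eq_mul [Algebra ℚ A] (D : Derivation ℚ A A) (a b s : A)
    (hb : D b = s * (2 * b) + 6 * a) (ha : D a = s * (3 * a) + (1 / 3 : ℚ) • b ^ 2) :
    D (27 * a ^ 2 - b ^ 3) = s * 6 * (27 * a ^ 2 - b ^ 3) := by
  have h3 : algebraMap ℚ A (1 / 3) * 3 = 1 := by
    rw [← map_ofNat (algebraMap ℚ A) 3, ← map_mul]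
    norm_num
  rw [D.map_twentySeven_sq_sub_cube, ha, hb, Algebra.smul_def]
  linear_combination 18 * b ^ 2 * a * h3

end Derivation

/-- The polynomial `27y₃² - y₂³` is invariant under the vector field `v`:
`v(27y₃² - y₂³)` is a polynomial multiple of `27y₃² - y₂³`, i.e. the
hypersurface `Δ₂ = {27y₃² - y₂³ = 0}` is tangent to the foliation defined by `v`. -/
theorem delta2_invariant :
    ∃ q : MvPolynomial (Fin 4) ℚ,
      vD (27 * X 3 ^ 2 - X 2 ^ 3) = q * (27 * X 3 ^ 2 - X 2 ^ 3) := by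
  set s : MvPolynomial (Fin 4) ℚ := -(1 + C (1 / 12 : ℚ) * (X 2 - X 0))
  have h6 : (C (1 / 6 : ℚ) : MvPolynomial (Fin 4) ℚ) = 2 * C (1 / 12) := by
    rw [← map_ofNat C, ← C_mul]; norm_num
  have h4 : (C (1 / 4 : ℚ) : MvPolynomial (Fin 4) ℚ) = 3 * C (1 / 12) := by
    rw [← map_ofNat C, ← C_mul]; norm_num
  refine ⟨s * 6, vD.map_twentySeven_sq_sub_cube_eq_mul _ _ s ?_ ?_⟩
  · simp only [vD, mkDerivation_X, Matrix.cons_val]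
    linear_combination (X 0 - X 2) * X 2 * h6
  · simp only [vD, mkDerivation_X, Matrix.cons_val, ← C_mul']
    linear_combination (X 0 - X 2) * X 3 * h4
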